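/- Let y : ℝ³ → ℝ be smooth and set u = ∂₁∂₂ y and v = ∂₃∂₃ y − x₂ · ∂₁ y. Then the fourth-order compatibility condition B ≡ ∂₃⁴ u − ∂₁∂₂∂₃∂₃ v − 2 x₂ · ∂₁∂₃∂₃ u + x₂ · ∂₁∂₁∂₂ v − ∂₁∂₁ v + x₂² · ∂₁∂₁ u = 0 holds identically. -/

import Mathlib

/-- Partial derivative in the `i`-th coordinate direction on `ℝ³`. -/
noncomputable def pd (i : Fin 3) (f : (Fin 3 → ℝ) → ℝ) : (Fin 3 → ℝ) → ℝ :=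
  fun x => fderiv ℝ f x (Pi.single i 1)

theorem pd_smooth (i : Fin 3) {f : (Fin 3 → ℝ) → ℝ} (hf : ContDiff ℝ (⊤ : ℕ∞) f) :
    ContDiff ℝ (⊤ : ℕ∞) (pd i f) := by
  unfold pd
  exact (ContinuousLinearMap.apply ℝ ℝ (Pi.single i 1)).contDiff.comp
    (hf.fderiv_right (m := (⊤ : ℕ∞)) (by simp))

theorem pd_comm (i j : Fin 3) {f : (Fin 3 → ℝ) → ℝ} (hf : ContDiff ℝ (⊤ : ℕ∞) f) :
    pd i (pd j f) = pd j (pd i f) := by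
  funext x
  have hd : Differentiable ℝ (fderiv ℝ f) :=
    (hf.fderiv_right (m := (⊤ : ℕ∞)) (by simp)).differentiable (by simp)
  have key : ∀ a b : Fin 3,
      pd a (pd b f) x = fderiv ℝ (fderiv ℝ f) x (Pi.single a 1) (Pi.single b 1) := by
    intro a b
    unfold pd
    have h1 : fderiv ℝ (⇑(ContinuousLinearMap.apply ℝ ℝ (Pi.single b (1:ℝ))) ∘ fderiv ℝ f) x
        = (ContinuousLinearMap.apply ℝ ℝ (Pi.single b (1:ℝ))).comp
        (fderiv ℝ (fderiv ℝ f) x) :=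
      (((ContinuousLinearMap.apply ℝ ℝ (Pi.single b (1:ℝ) : Fin 3 → ℝ)).hasFDerivAt (x := fderiv ℝ f x)).comp x
        (hd x).hasFDerivAt).fderiv
    rw [show (fun x => fderiv ℝ f x (Pi.single b 1)) =
      ⇑(ContinuousLinearMap.apply ℝ ℝ (Pi.single b (1:ℝ))) ∘ fderiv ℝ f from rfl, h1]
    simp
  rw [key i j, key j i]
  exact (hf.contDiffAt.isSymmSndFDerivAt (by rw [minSmoothness_of_isRCLikeNormedField]; exact WithTop.coe_le_coe.mpr (le_top : (2:ℕ∞) ≤ ⊤))).eq _ _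

theorem pd_sub (i : Fin 3) {f g : (Fin 3 → ℝ) → ℝ} (hf : ContDiff ℝ (⊤ : ℕ∞) f)
    (hg : ContDiff ℝ (⊤ : ℕ∞) g) :
    pd i (fun x => f x - g x) = fun x => pd i f x - pd i g x := by
  funext x
  unfold pd
  rw [fderiv_fun_sub (hf.differentiable (by simp) x) (hg.differentiable (by simp) x)]
  simp

theorem pd_add (i : Fin 3) {f g : (Fin 3 → ℝ) → ℝ} (hf : ContDiff ℝ (⊤ : ℕ∞) f)
    (hg : ContDiff ℝ (⊤ : ℕ∞) g) :
    pd i (fun x => f x + g x) = fun x => pd i f x + pd i g x := by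
  funext x
  unfold pd
  rw [fderiv_fun_add (hf.differentiable (by simp) x) (hg.differentiable (by simp) x)]
  simp

theorem coord_smooth : ContDiff ℝ (⊤ : ℕ∞) (fun x : Fin 3 → ℝ => x 1) :=
  (ContinuousLinearMap.proj (R := ℝ) (φ := fun _ : Fin 3 => ℝ) 1).contDiff

theorem pd_mul (i : Fin 3) {g : (Fin 3 → ℝ) → ℝ} (hg : ContDiff ℝ (⊤ : ℕ∞) g) :
    pd i (fun x => x 1 * g x) = fun x => (Pi.single i (1:ℝ) : Fin 3 → ℝ) 1 * g x + x 1 * pd i g x := by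
  funext x
  unfold pd
  have h1 : DifferentiableAt ℝ (fun x : Fin 3 → ℝ => x 1) x :=
    (coord_smooth.differentiable (by simp) x)
  rw [fderiv_fun_mul h1 (hg.differentiable (by simp) x)]
  have h2 : fderiv ℝ (fun x : Fin 3 → ℝ => x 1) x
      = ContinuousLinearMap.proj (R := ℝ) (φ := fun _ : Fin 3 => ℝ) 1 :=
    (ContinuousLinearMap.proj (R := ℝ) (φ := fun _ : Fin 3 => ℝ) 1).fderiv
  simp [h2]
  ring

theorem pd_mul0 {g : (Fin 3 → ℝ) → ℝ} (hg : ContDiff ℝ (⊤ : ℕ∞) g) :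
    pd 0 (fun x => x 1 * g x) = fun x => x 1 * pd 0 g x := by
  rw [pd_mul 0 hg]
  funext x
  simp [Pi.single_apply, show (1:Fin 3) ≠ 0 by decide]

theorem pd_mul2 {g : (Fin 3 → ℝ) → ℝ} (hg : ContDiff ℝ (⊤ : ℕ∞) g) :
    pd 2 (fun x => x 1 * g x) = fun x => x 1 * pd 2 g x := by
  rw [pd_mul 2 hg]
  funext x
  simp [Pi.single_apply, show (1:Fin 3) ≠ 2 by decide]

theorem pd_mul1 {g : (Fin 3 → ℝ) → ℝ} (hg : ContDiff ℝ (⊤ : ℕ∞) g) :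
    pd 1 (fun x => x 1 * g x) = fun x => g x + x 1 * pd 1 g x := by
  rw [pd_mul 1 hg]
  funext x
  simp

noncomputable def pdl : List (Fin 3) → ((Fin 3 → ℝ) → ℝ) → ((Fin 3 → ℝ) → ℝ)
  | [], f => f
  | i :: l, f => pd i (pdl l f)

theorem pdl_smooth (l : List (Fin 3)) {f : (Fin 3 → ℝ) → ℝ} (hf : ContDiff ℝ (⊤ : ℕ∞) f) :
    ContDiff ℝ (⊤ : ℕ∞) (pdl l f) := by
  induction l with
  | nil => exact hf
  | cons i l ih => exact pd_smooth i ih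

theorem pdl_perm {l l' : List (Fin 3)} (h : l.Perm l') {f : (Fin 3 → ℝ) → ℝ}
    (hf : ContDiff ℝ (⊤ : ℕ∞) f) : pdl l f = pdl l' f := by
  induction h with
  | nil => rfl
  | cons x _ ih => simp only [pdl, ih]
  | swap a b l => exact pd_comm b a (pdl_smooth l hf)
  | trans _ _ ih1 ih2 => rw [ih1, ih2]

theorem stmt_9 (y : (Fin 3 → ℝ) → ℝ) (hy : ContDiff ℝ (⊤ : ℕ∞) y)
    (u v : (Fin 3 → ℝ) → ℝ)
    (hu : u = pd 0 (pd 1 y))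
    (hv : v = fun x => pd 2 (pd 2 y) x - x 1 * pd 0 y x) :
    ∀ x, pd 2 (pd 2 (pd 2 (pd 2 u))) x - pd 0 (pd 1 (pd 2 (pd 2 v))) x
      - 2 * x 1 * pd 0 (pd 2 (pd 2 u)) x + x 1 * pd 0 (pd 0 (pd 1 v)) x
      - pd 0 (pd 0 v) x + (x 1) ^ 2 * pd 0 (pd 0 u) x = 0 := by
  subst hu hv
  intro x
  have S := @pd_smooth
  have C := coord_smooth
  simp only [
    pd_sub 2 (S 2 (S 2 hy)) (C.mul (S 0 hy)),
    pd_mul2 (S 0 hy),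
    pd_sub 2 (S 2 (S 2 (S 2 hy))) (C.mul (S 2 (S 0 hy))),
    pd_mul2 (S 2 (S 0 hy)),
    pd_sub 1 (S 2 (S 2 (S 2 (S 2 hy)))) (C.mul (S 2 (S 2 (S 0 hy)))),
    pd_mul1 (S 2 (S 2 (S 0 hy))),
    pd_sub 0 (S 1 (S 2 (S 2 (S 2 (S 2 hy)))))
      ((S 2 (S 2 (S 0 hy))).add (C.mul (S 1 (S 2 (S 2 (S 0 hy)))))),
    pd_add 0 (S 2 (S 2 (S 0 hy))) (C.mul (S 1 (S 2 (S 2 (S 0 hy))))),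
    pd_mul0 (S 1 (S 2 (S 2 (S 0 hy)))),
    pd_sub 1 (S 2 (S 2 hy)) (C.mul (S 0 hy)),
    pd_mul1 (S 0 hy),
    pd_sub 0 (S 1 (S 2 (S 2 hy))) ((S 0 hy).add (C.mul (S 1 (S 0 hy)))),
    pd_add 0 (S 0 hy) (C.mul (S 1 (S 0 hy))),
    pd_mul0 (S 1 (S 0 hy)),
    pd_sub 0 (S 0 (S 1 (S 2 (S 2 hy))))
      ((S 0 (S 0 hy)).add (C.mul (S 0 (S 1 (S 0 hy))))),
    pd_add 0 (S 0 (S 0 hy)) (C.mul (S 0 (S 1 (S 0 hy)))),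
    pd_mul0 (S 0 (S 1 (S 0 hy))),
    pd_sub 0 (S 2 (S 2 hy)) (C.mul (S 0 hy)),
    pd_mul0 (S 0 hy),
    pd_sub 0 (S 0 (S 2 (S 2 hy))) (C.mul (S 0 (S 0 hy))),
    pd_mul0 (S 0 (S 0 hy))]
  have n1 : pd 2 (pd 2 (pd 2 (pd 2 (pd 0 (pd 1 y)))))
      = pd 0 (pd 1 (pd 2 (pd 2 (pd 2 (pd 2 y))))) :=
    pdl_perm (l := [2,2,2,2,0,1]) (l' := [0,1,2,2,2,2]) (by decide) hy
  have n2 : pd 0 (pd 2 (pd 2 (pd 0 y))) = pd 0 (pd 0 (pd 2 (pd 2 y))) :=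
    pdl_perm (l := [0,2,2,0]) (l' := [0,0,2,2]) (by decide) hy
  have n3 : pd 0 (pd 1 (pd 2 (pd 2 (pd 0 y)))) = pd 0 (pd 0 (pd 1 (pd 2 (pd 2 y)))) :=
    pdl_perm (l := [0,1,2,2,0]) (l' := [0,0,1,2,2]) (by decide) hy
  have n4 : pd 0 (pd 2 (pd 2 (pd 0 (pd 1 y)))) = pd 0 (pd 0 (pd 1 (pd 2 (pd 2 y)))) :=
    pdl_perm (l := [0,2,2,0,1]) (l' := [0,0,1,2,2]) (by decide) hy
  have n5 : pd 0 (pd 0 (pd 1 (pd 0 y))) = pd 0 (pd 0 (pd 0 (pd 1 y))) :=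
    pdl_perm (l := [0,0,1,0]) (l' := [0,0,0,1]) (by decide) hy
  rw [n1, n2, n3, n4, n5]
  ring
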